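/- arXiv:2501.17468 — 3 statements merged into one kernel-verified Lean document; each statement's English description precedes it below -/
import Mathlib

section
/- Let A be a real m×d matrix, σ_y > 0, ν > 0, σ > 0, and let s_max > 0 be the largest singular value of A. Define ξ = (1/s_max²)·(ν - (s_max²/σ_y² + 1/ν)⁻¹), Σ = σ²·I - ((1/σ_y²) AᵀA + (1/ν)·I)⁻¹, and Σ̂ = (σ² - ν)·I + ξ·AᵀA. Then (i) Σ̂ v = Σ v for every v in the null space of A, and (ii) Σ̂ v = Σ v for every v ∈ ℝ^d satisfying AᵀA v = s_max² v. -/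
/-! Both `Σ` and `Σ̂` are functions of `AᵀA`, so on an eigenvector of `AᵀA` with eigenvalue `λ`
they act as the scalars `σ² - (λ/σ_y² + 1/ν)⁻¹` and `σ² - ν + ξλ`. These agree at `λ = 0`, and
`ξ` is chosen exactly so that they agree at `λ = s_max²`. -/

open Matrix

namespace Matrix

section Eigenvector

variable {n K : Type*} [Fintype n] [DecidableEq n] [Field K]
  {B : Matrix n n K} {v : n → K} {μ : K}

theorem smul_add_smul_one_mulVec_of_mulVec_eq_smul (a b : K) (hv : B *ᵥ v = μ • v) :
    (a • B + b • 1) *ᵥ v = (a * μ + b) • v := by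
  rw [add_mulVec, smul_mulVec, smul_mulVec, one_mulVec, hv, smul_smul, add_smul]

theorem inv_mulVec_of_mulVec_eq_smul (hB : IsUnit B) (hv : B *ᵥ v = μ • v) :
    B⁻¹ *ᵥ v = μ⁻¹ • v := by
  by_cases hμ : μ = 0
  · have hv0 : v = 0 := mulVec_injective_of_isUnit hB <| by rw [hv, hμ, zero_smul, mulVec_zero]
    rw [hv0, mulVec_zero, smul_zero]
  · let _ := hB.invertible
    exact inv_mulVec_eq_vec <| by rw [mulVec_smul, hv, smul_smul, inv_mul_cancel₀ hμ, one_smul]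

theorem smul_one_sub_inv_mulVec_of_mulVec_eq_smul (c : K) (hB : IsUnit B)
    (hv : B *ᵥ v = μ • v) : (c • 1 - B⁻¹) *ᵥ v = (c - μ⁻¹) • v := by
  rw [sub_mulVec, smul_mulVec, one_mulVec, inv_mulVec_of_mulVec_eq_smul hB hv, sub_smul]

end Eigenvector

theorem posDef_smul_transpose_mul_self_add_smul_one {m d : Type*} [Fintype m] [Fintype d]
    [DecidableEq d] (A : Matrix m d ℝ) {a b : ℝ} (ha : 0 ≤ a) (hb : 0 < b) :
    (a • (Aᵀ * A) + b • 1).PosDef :=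
  PosDef.posSemidef_add ((posSemidef_conjTranspose_mul_self A).smul ha) (PosDef.one.smul hb)

end Matrix

theorem sigma_hat_agrees_with_sigma_general
    (m d : ℕ) (A : Matrix (Fin m) (Fin d) ℝ)
    (σy ν σ smax : ℝ) (hν : 0 < ν) (hsmax : 0 < smax)
    (ξ : ℝ) (hξ : ξ = (1 / smax ^ 2) * (ν - (smax ^ 2 / σy ^ 2 + 1 / ν)⁻¹))
    (Sgm : Matrix (Fin d) (Fin d) ℝ)
    (hSgm : Sgm = σ ^ 2 • (1 : Matrix (Fin d) (Fin d) ℝ)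
        - ((1 / σy ^ 2) • (Aᵀ * A) + (1 / ν) • (1 : Matrix (Fin d) (Fin d) ℝ))⁻¹)
    (SgmHat : Matrix (Fin d) (Fin d) ℝ)
    (hSgmHat : SgmHat = (σ ^ 2 - ν) • (1 : Matrix (Fin d) (Fin d) ℝ) + ξ • (Aᵀ * A)) :
    (∀ v : Fin d → ℝ, A *ᵥ v = 0 → SgmHat *ᵥ v = Sgm *ᵥ v)
    ∧ (∀ v : Fin d → ℝ, (Aᵀ * A) *ᵥ v = smax ^ 2 • v → SgmHat *ᵥ v = Sgm *ᵥ v) := by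
  have hunit : IsUnit ((1 / σy ^ 2) • (Aᵀ * A) + (1 / ν) • (1 : Matrix (Fin d) (Fin d) ℝ)) :=
    (posDef_smul_transpose_mul_self_add_smul_one A (by positivity) (by positivity)).isUnit
  have hSgm_eigen {v : Fin d → ℝ} {μ : ℝ} (hv : (Aᵀ * A) *ᵥ v = μ • v) :
      Sgm *ᵥ v = (σ ^ 2 - (1 / σy ^ 2 * μ + 1 / ν)⁻¹) • v := by
    rw [hSgm]
    exact smul_one_sub_inv_mulVec_of_mulVec_eq_smul _ hunit
      (smul_add_smul_one_mulVec_of_mulVec_eq_smul _ _ hv)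
  have hSgmHat_eigen {v : Fin d → ℝ} {μ : ℝ} (hv : (Aᵀ * A) *ᵥ v = μ • v) :
      SgmHat *ᵥ v = (ξ * μ + (σ ^ 2 - ν)) • v := by
    rw [hSgmHat, add_comm]
    exact smul_add_smul_one_mulVec_of_mulVec_eq_smul _ _ hv
  refine ⟨fun v hv => ?_, fun v hv => ?_⟩
  · have hker : (Aᵀ * A) *ᵥ v = (0 : ℝ) • v := by
      rw [← mulVec_mulVec, hv, mulVec_zero, zero_smul]
    rw [hSgm_eigen hker, hSgmHat_eigen hker]
    congr 1
    simp
  · rw [hSgm_eigen hv, hSgmHat_eigen hv, hξ]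
    congr 1
    field_simp
    ring

/-- The SVD-free approximation `Σ̂ = (σ²-ν)I + ξAᵀA` of the renoising covariance
`Σ = σ²I - ((1/σ_y²)AᵀA + (1/ν)I)⁻¹` agrees with `Σ` (i) on the null space of `A` and
(ii) on the eigenspace of `AᵀA` for the eigenvalue `s_max²`, where `s_max` is the largest
singular value of `A` and `ξ = (1/s_max²)(ν - (s_max²/σ_y² + 1/ν)⁻¹)`. -/
theorem sigma_hat_agrees_with_sigma
    (m d : ℕ) (A : Matrix (Fin m) (Fin d) ℝ)
    (σy ν σ smax : ℝ) (hσy : 0 < σy) (hν : 0 < ν) (hσ : 0 < σ) (hsmax : 0 < smax)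
    (hgreatest : IsGreatest
      {t : ℝ | 0 ≤ t ∧ ∃ v : Fin d → ℝ, v ≠ 0 ∧ (Aᵀ * A) *ᵥ v = (t ^ 2) • v} smax)
    (ξ : ℝ) (hξ : ξ = (1 / smax ^ 2) * (ν - (smax ^ 2 / σy ^ 2 + 1 / ν)⁻¹))
    (Sgm : Matrix (Fin d) (Fin d) ℝ)
    (hSgm : Sgm = σ ^ 2 • (1 : Matrix (Fin d) (Fin d) ℝ)
        - ((1 / σy ^ 2) • (Aᵀ * A) + (1 / ν) • (1 : Matrix (Fin d) (Fin d) ℝ))⁻¹)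
    (SgmHat : Matrix (Fin d) (Fin d) ℝ)
    (hSgmHat : SgmHat = (σ ^ 2 - ν) • (1 : Matrix (Fin d) (Fin d) ℝ) + ξ • (Aᵀ * A)) :
    (∀ v : Fin d → ℝ, A *ᵥ v = 0 → SgmHat *ᵥ v = Sgm *ᵥ v)
    ∧ (∀ v : Fin d → ℝ, (Aᵀ * A) *ᵥ v = smax ^ 2 • v → SgmHat *ᵥ v = Sgm *ᵥ v) :=
  sigma_hat_agrees_with_sigma_general m d A σy ν σ smax hν hsmax ξ hξ Sgm hSgm SgmHat hSgmHat
end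

section
/- Let A be a real m×d matrix, σ_y > 0, σ_init > 0, ρ > 1. For each integer n ≥ 1, let σ²[n] = σ_init²/ρ^{n-1}, suppose 0 < ν[n] ≤ σ²[n], and define C[n] = ((1/σ_y²) AᵀA + (1/ν[n])·I)⁻¹. Then for all n: C[n] ⪯ ν[n]·I ⪯ (σ_init²/ρ^{n-1})·I in the Loewner order; in particular trace(C[n]) ≤ d·σ_init²/ρ^{n-1}, and trace(C[n]) → 0 as n → ∞. Hence if x̂[n] - x₀ is a centered Gaussian random vector with covariance C[n], then E‖x̂[n] - x₀‖² ≤ d·σ_init²/ρ^{n-1} → 0, i.e., the FIRE iterates x̂[n] converge to the true x₀ in mean square. -/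
/-!
Write `B = S + ν⁻¹ I` with `S = σ_y⁻² AᵀA ⪰ 0`. Since `S` commutes with `B`,
`ν I - B⁻¹ = ν B⁻¹ S = ν B⁻¹ (S B) B⁻¹`, and `S B = S² + ν⁻¹ S ⪰ 0`; hence `C = B⁻¹ ⪯ ν I`.
Taking traces gives `trace C ≤ d ν ≤ d σ_init² / ρⁿ → 0`, and the mean squared norm of a centered
random vector is the trace of its covariance.
-/

open Matrix MeasureTheory
open scoped ComplexOrder

namespace Matrix

variable {n 𝕜 : Type*} [Fintype n] [DecidableEq n] [RCLike 𝕜]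

lemma PosSemidef.posSemidef_smul_one_sub_inv_add_smul_one {S : Matrix n n 𝕜}
    (hS : S.PosSemidef) {ν : ℝ} (hν : 0 < ν) :
    (ν • (1 : Matrix n n 𝕜) - (S + ν⁻¹ • 1)⁻¹).PosSemidef := by
  set B := S + ν⁻¹ • (1 : Matrix n n 𝕜)
  have hB : B.PosDef := PosDef.posSemidef_add hS (PosDef.one.smul (inv_pos.2 hν))
  have hBdet : IsUnit B.det := (isUnit_iff_isUnit_det B).1 hB.isUnit
  have hSB : (S * B).PosSemidef := by
    have hSS : (S * S).PosSemidef := by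
      simpa only [hS.isHermitian.eq] using posSemidef_conjTranspose_mul_self S
    simpa only [B, Matrix.mul_add, Matrix.mul_smul, Matrix.mul_one] using
      hSS.add (hS.smul (inv_nonneg.2 hν.le))
  have key : ν • (1 : Matrix n n 𝕜) - B⁻¹ = ν • (B⁻¹ * (S * B) * B⁻¹) := by
    have hνB : ν • B - 1 = ν • S := by
      simp only [B, smul_add, smul_smul, mul_inv_cancel₀ hν.ne', one_smul, add_sub_cancel_right]
    calc ν • (1 : Matrix n n 𝕜) - B⁻¹ = B⁻¹ * (ν • B - 1) := by
          rw [Matrix.mul_sub, Matrix.mul_smul, nonsing_inv_mul B hBdet, Matrix.mul_one]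
      _ = ν • (B⁻¹ * (S * B) * B⁻¹) := by
          rw [hνB, Matrix.mul_smul, Matrix.mul_assoc, Matrix.mul_assoc, mul_nonsing_inv B hBdet,
            Matrix.mul_one]
  rw [key]
  refine PosSemidef.smul ?_ hν.le
  simpa only [hB.inv.isHermitian.eq] using hSB.mul_mul_conjTranspose_same B⁻¹

lemma trace_le_of_posSemidef_smul_one_sub {M : Matrix n n ℝ} {c : ℝ}
    (h : (c • (1 : Matrix n n ℝ) - M).PosSemidef) : M.trace ≤ Fintype.card n * c := by
  have := h.trace_nonneg
  rwa [trace_sub, trace_smul, trace_one, smul_eq_mul, mul_comm, sub_nonneg] at this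

end Matrix

namespace MeasureTheory

variable {α ι : Type*} [MeasurableSpace α] {μ : Measure α}

lemma integral_finsetSum_le_of_nonneg {s : Finset ι} {f : ι → α → ℝ}
    (hf : ∀ i ∈ s, 0 ≤ f i) (hfm : ∀ i ∈ s, AEStronglyMeasurable (f i) μ) :
    ∫ a, ∑ i ∈ s, f i a ∂μ ≤ ∑ i ∈ s, ∫ a, f i a ∂μ := by
  by_cases hint : Integrable (fun a => ∑ i ∈ s, f i a) μ
  · refine (integral_finsetSum s fun i hi => hint.mono' (hfm i hi) ?_).le
    filter_upwards with a
    rw [Real.norm_of_nonneg (hf i hi a)]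
    exact Finset.single_le_sum (fun j hj => hf j hj a) hi
  · rw [integral_undef hint]
    exact Finset.sum_nonneg fun i hi => integral_nonneg (hf i hi)

end MeasureTheory

theorem fire_convergence_general
    (m d : ℕ) (A : Matrix (Fin m) (Fin d) ℝ) (σy σinit ρ : ℝ)
    (hρ : 1 < ρ)
    (ν : ℕ → ℝ) (hν : ∀ n, 0 < ν n ∧ ν n ≤ σinit ^ 2 / ρ ^ n)
    (C : ℕ → Matrix (Fin d) (Fin d) ℝ)
    (hC : ∀ n, C n = ((1 / σy ^ 2) • (Aᵀ * A)
        + (1 / ν n) • (1 : Matrix (Fin d) (Fin d) ℝ))⁻¹) :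
    (∀ n, (ν n • (1 : Matrix (Fin d) (Fin d) ℝ) - C n).PosSemidef
        ∧ ((σinit ^ 2 / ρ ^ n) • (1 : Matrix (Fin d) (Fin d) ℝ)
            - ν n • (1 : Matrix (Fin d) (Fin d) ℝ)).PosSemidef)
    ∧ (∀ n, (C n).trace ≤ d * σinit ^ 2 / ρ ^ n)
    ∧ Filter.Tendsto (fun n => (C n).trace) Filter.atTop (nhds 0)
    ∧ (∀ n, ∀ μ : Measure (Fin d → ℝ), IsProbabilityMeasure μ →
        (∀ i j, ∫ x, x i * x j ∂μ = C n i j) →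
        (∫ x, ∑ i, (x i) ^ 2 ∂μ) ≤ d * σinit ^ 2 / ρ ^ n)
    ∧ Filter.Tendsto (fun n : ℕ => (d : ℝ) * σinit ^ 2 / ρ ^ n) Filter.atTop (nhds 0) := by
  have hAtA : ((1 / σy ^ 2) • (Aᵀ * A)).PosSemidef :=
    (posSemidef_conjTranspose_mul_self A).smul (by positivity)
  have hC_le : ∀ n, (ν n • (1 : Matrix (Fin d) (Fin d) ℝ) - C n).PosSemidef := fun n => by
    rw [hC n, one_div (ν n)]
    exact hAtA.posSemidef_smul_one_sub_inv_add_smul_one (hν n).1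
  have hC_psd : ∀ n, (C n).PosSemidef := fun n => by
    rw [hC n]
    exact (hAtA.add (PosSemidef.one.smul (one_div_pos.2 (hν n).1).le)).inv
  have htrace : ∀ n, (C n).trace ≤ d * σinit ^ 2 / ρ ^ n := fun n =>
    calc (C n).trace ≤ d * ν n := by simpa using trace_le_of_posSemidef_smul_one_sub (hC_le n)
      _ ≤ d * (σinit ^ 2 / ρ ^ n) := by gcongr; exact (hν n).2
      _ = d * σinit ^ 2 / ρ ^ n := (mul_div_assoc _ _ _).symm
  have hbound : Filter.Tendsto (fun n : ℕ => (d : ℝ) * σinit ^ 2 / ρ ^ n) Filter.atTop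
      (nhds 0) := by
    simpa [div_eq_mul_inv, inv_pow] using
      (tendsto_pow_atTop_nhds_zero_of_lt_one (by positivity) (inv_lt_one_of_one_lt₀ hρ)).const_mul
        ((d : ℝ) * σinit ^ 2)
  refine ⟨fun n => ⟨hC_le n, ?_⟩, htrace,
    squeeze_zero (fun n => (hC_psd n).trace_nonneg) htrace hbound, ?_, hbound⟩
  · rw [← sub_smul]
    exact PosSemidef.one.smul (sub_nonneg.2 (hν n).2)
  · intro n μ _ hcov
    calc ∫ x, ∑ i, (x i) ^ 2 ∂μ ≤ ∑ i, ∫ x, (x i) ^ 2 ∂μ :=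
          integral_finsetSum_le_of_nonneg (fun i _ x => sq_nonneg (x i))
            fun i _ => ((continuous_apply i).pow 2).aestronglyMeasurable
      _ = (C n).trace :=
          Finset.sum_congr rfl fun i _ => by simpa only [sq, diag_apply] using hcov i i
      _ ≤ d * σinit ^ 2 / ρ ^ n := htrace n

/-- Theorem 1 of the paper at the covariance level. With the geometric schedule
`σ²[n] = σ_init²/ρⁿ` (indexing the iterations by `n = 0, 1, 2, …`) and denoiser output-error
variances `0 < ν[n] ≤ σ²[n]`, the FIRE error covariances
`C[n] = ((1/σ_y²)AᵀA + (1/ν[n])I)⁻¹` satisfy `C[n] ⪯ ν[n]I ⪯ (σ_init²/ρⁿ)I` in the Loewner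
order, `trace C[n] ≤ d σ_init²/ρⁿ → 0`, and any centered random vector with covariance `C[n]`
(in particular the FIRE error `x̂[n] - x₀`) has `E‖x̂[n] - x₀‖² ≤ d σ_init²/ρⁿ → 0`,
i.e. the iterates converge to `x₀` in mean square. -/
theorem fire_convergence
    (m d : ℕ) (A : Matrix (Fin m) (Fin d) ℝ) (σy σinit ρ : ℝ)
    (hσy : 0 < σy) (hσinit : 0 < σinit) (hρ : 1 < ρ)
    (ν : ℕ → ℝ) (hν : ∀ n, 0 < ν n ∧ ν n ≤ σinit ^ 2 / ρ ^ n)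
    (C : ℕ → Matrix (Fin d) (Fin d) ℝ)
    (hC : ∀ n, C n = ((1 / σy ^ 2) • (Aᵀ * A)
        + (1 / ν n) • (1 : Matrix (Fin d) (Fin d) ℝ))⁻¹) :
    (∀ n, (ν n • (1 : Matrix (Fin d) (Fin d) ℝ) - C n).PosSemidef
        ∧ ((σinit ^ 2 / ρ ^ n) • (1 : Matrix (Fin d) (Fin d) ℝ)
            - ν n • (1 : Matrix (Fin d) (Fin d) ℝ)).PosSemidef)
    ∧ (∀ n, (C n).trace ≤ d * σinit ^ 2 / ρ ^ n)
    ∧ Filter.Tendsto (fun n => (C n).trace) Filter.atTop (nhds 0)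
    ∧ (∀ n, ∀ μ : Measure (Fin d → ℝ), IsProbabilityMeasure μ →
        (∀ i j, ∫ x, x i * x j ∂μ = C n i j) →
        (∫ x, ∑ i, (x i) ^ 2 ∂μ) ≤ d * σinit ^ 2 / ρ ^ n)
    ∧ Filter.Tendsto (fun n : ℕ => (d : ℝ) * σinit ^ 2 / ρ ^ n) Filter.atTop (nhds 0) :=
  fire_convergence_general m d A σy σinit ρ hρ ν hν C hC
end

section
/- Let s ≥ 0, ν > 0, and 0 < σ_y ≤ σ̂. Then ν - (s²σ_y²/σ̂⁴ + 1/ν)/(s²/σ̂² + 1/ν)² ≥ 0. -/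
/-- Nonnegativity of the approximate renoising coefficient: for `s ≥ 0`, `ν > 0`,
`0 < σ_y ≤ σ̂`, we have `ν - (s²σ_y²/σ̂⁴ + 1/ν)/(s²/σ̂² + 1/ν)² ≥ 0`. -/
theorem xi_nonneg (s ν σy σhat : ℝ) (hs : 0 ≤ s) (hν : 0 < ν)
    (hσy : 0 < σy) (hle : σy ≤ σhat) :
    0 ≤ ν - (s ^ 2 * σy ^ 2 / σhat ^ 4 + 1 / ν) / (s ^ 2 / σhat ^ 2 + 1 / ν) ^ 2 := by
  have hσh : 0 < σhat := lt_of_lt_of_le hσy hle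
  have hden : 0 < (s ^ 2 / σhat ^ 2 + 1 / ν) ^ 2 := by positivity
  rw [sub_nonneg, div_le_iff₀ hden]
  have h1 : s ^ 2 * σy ^ 2 / σhat ^ 4 ≤ s ^ 2 / σhat ^ 2 := by
    rw [div_le_div_iff₀ (by positivity) (by positivity)]
    have hy2 : σy ^ 2 ≤ σhat ^ 2 := pow_le_pow_left₀ hσy.le hle 2
    nlinarith [mul_nonneg (mul_nonneg (sq_nonneg s) (sq_nonneg σhat)) (sub_nonneg.2 hy2)]
  have h2 : s ^ 2 / σhat ^ 2 + 1 / ν ≤ ν * (s ^ 2 / σhat ^ 2 + 1 / ν) ^ 2 := by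
    have e : ν * (s ^ 2 / σhat ^ 2 + 1 / ν) ^ 2
        = ν * (s ^ 2 / σhat ^ 2) ^ 2 + 2 * (s ^ 2 / σhat ^ 2) + 1 / ν := by
      field_simp; ring
    rw [e]
    have : 0 ≤ ν * (s ^ 2 / σhat ^ 2) ^ 2 := by positivity
    have : 0 ≤ s ^ 2 / σhat ^ 2 := by positivity
    linarith
  linarith
end
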